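/- Let n ≥ 3, K ≥ 1, ε > 0, and 0 < s ≤ n−2. Let (f, g) be a K-cinematic pair of maps ℝ^{n−2} → ℝ^{n−1} on [0,1]^{n−2}, set d := ‖f − g‖_{C²([0,1]^{n−2})}, and let δ satisfy 0 < δ ≤ d. Let X ⊂ [0,1]^{n−2} be a finite (δ, s, δ^{−ε})-set with #X ≤ δ^{−s}, and define P_{f,g} := {x ∈ [0,1]^{n−2} : |f(x) − g(x)| < 2δ}. Then the set X^δ ∩ P_{f,g}, where X^δ := {p : dist(p, X) < δ}, can be covered by at most C(n,K) · δ^{−ε} · d^{−s} balls of radius δ, where C(n,K) depends only on n and K. -/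

import Mathlib

/-!
Write `h = f - g` and `d = ‖h‖_{C²}`. Since `‖Dh‖ ≤ d ≤ 2K`, every point of `X` within `δ` of
`{|h| < 2δ}` satisfies `|h| ≤ (2 + 2K)δ`. The cinematic condition says that in every direction
either `h` or its directional derivative is at least `d / K`; combined with Taylor's formula this
forces any two such points at distance `< 1/(4K)` to lie within `O(Kδ/d)` of each other. Covering
`[0,1]^{n-2}` by `O_K(1)` balls of radius `1/(8K)`, each ball therefore meets them only inside one
ball of radius `O(Kδ/d) ≥ δ`, which by the `(δ, s, δ^{-ε})` condition and `#X ≤ δ^{-s}` contains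
at most `δ^{-ε} (δ/d)^s δ^{-s} ≲ δ^{-ε} d^{-s}` points of `X`.
-/

open MeasureTheory Set
open scoped ENNReal NNReal

/-- The unit cube `[0,1]^m` in `ℝ^m`. -/
def unitCube (m : ℕ) : Set (EuclideanSpace ℝ (Fin m)) :=
  {x | ∀ i, x i ∈ Set.Icc (0:ℝ) 1}

/-- The `C²` norm of a map on a subset: `sup_{x ∈ D} max(|h x|, ‖Dh x‖, ‖D²h x‖)`. -/
noncomputable def C2NormOn {m l : ℕ}
    (h : EuclideanSpace ℝ (Fin m) → EuclideanSpace ℝ (Fin l))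
    (D : Set (EuclideanSpace ℝ (Fin m))) : ℝ :=
  ⨆ x ∈ D, max ‖h x‖ (max ‖fderiv ℝ h x‖ ‖fderiv ℝ (fderiv ℝ h) x‖)

/-- A `K`-cinematic pair of maps on `[0,1]^m`. -/
def CinematicPair {m l : ℕ} (K : ℝ)
    (f g : EuclideanSpace ℝ (Fin m) → EuclideanSpace ℝ (Fin l)) : Prop :=
  ContDiff ℝ 2 f ∧ ContDiff ℝ 2 g ∧
  C2NormOn f (unitCube m) ≤ K ∧ C2NormOn g (unitCube m) ≤ K ∧
  ∀ x ∈ unitCube m, ∀ ξ : EuclideanSpace ℝ (Fin m), ‖ξ‖ = 1 →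
    K⁻¹ * C2NormOn (f - g) (unitCube m) ≤ ‖f x - g x‖ + ‖fderiv ℝ f x ξ - fderiv ℝ g x ξ‖

/-- The vertical `η`-neighbourhood of the graph of `f` over `D`. -/
def vertNbhd {m l : ℕ} (f : EuclideanSpace ℝ (Fin m) → EuclideanSpace ℝ (Fin l))
    (D : Set (EuclideanSpace ℝ (Fin m))) (η : ℝ) :
    Set (EuclideanSpace ℝ (Fin m) × EuclideanSpace ℝ (Fin l)) :=
  {p | p.1 ∈ D ∧ ‖p.2 - f p.1‖ < η}

/-- A finite `(δ, s, C)`-set in a metric space: every ball of radius `r ≥ δ` contains at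
most `C · r^s · #A` points of `A`. -/
def IsDeltaSet {α : Type*} [PseudoMetricSpace α] (δ s C : ℝ) (A : Set α) : Prop :=
  ∀ (x : α) (r : ℝ), δ ≤ r →
    ((A ∩ Metric.closedBall x r).ncard : ℝ) ≤ C * r ^ s * A.ncard

section UnitCube

variable {m : ℕ}

theorem convex_unitCube : Convex ℝ (unitCube m) := by
  intro x hx y hy a b ha hb hab i
  simpa using convex_Icc (0 : ℝ) 1 (hx i) (hy i) ha hb hab

theorem isCompact_unitCube : IsCompact (unitCube m) := by
  have : unitCube m = (EuclideanSpace.equiv (Fin m) ℝ) ⁻¹' Icc 0 1 := by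
    ext x; simp [unitCube, ← Set.pi_univ_Icc]
  rw [this]
  exact (EuclideanSpace.equiv (Fin m) ℝ).toHomeomorph.isCompact_preimage.mpr isCompact_Icc

theorem zero_mem_unitCube : (0 : EuclideanSpace ℝ (Fin m)) ∈ unitCube m := fun _ => by simp

theorem exists_finset_unitCube_subset_iUnion_ball {ρ : ℝ} (hρ : 0 < ρ) :
    ∃ T : Finset (EuclideanSpace ℝ (Fin m)),
      T.Nonempty ∧ unitCube m ⊆ ⋃ t ∈ T, Metric.ball t ρ := by
  obtain ⟨T, hT⟩ := isCompact_unitCube.elim_finite_subcover (fun t => Metric.ball t ρ)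
    (fun _ => Metric.isOpen_ball) (fun x _ => Set.mem_iUnion.mpr ⟨x, Metric.mem_ball_self hρ⟩)
  obtain ⟨t, ht, -⟩ := Set.mem_iUnion₂.mp (hT zero_mem_unitCube)
  exact ⟨T, ⟨t, ht⟩, hT⟩

end UnitCube

section C2Norm

variable {m l : ℕ} {u v : EuclideanSpace ℝ (Fin m) → EuclideanSpace ℝ (Fin l)}
  {D : Set (EuclideanSpace ℝ (Fin m))}

theorem c2NormOn_nonneg : 0 ≤ C2NormOn u D :=
  Real.iSup_nonneg fun _ => Real.iSup_nonneg fun _ => (norm_nonneg _).trans (le_max_left _ _)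

theorem c2NormOn_le {M : ℝ} (hM : 0 ≤ M)
    (h : ∀ x ∈ D, max ‖u x‖ (max ‖fderiv ℝ u x‖ ‖fderiv ℝ (fderiv ℝ u) x‖) ≤ M) :
    C2NormOn u D ≤ M :=
  Real.iSup_le (fun x => Real.iSup_le (h x) hM) hM

theorem le_c2NormOn (hu : ContDiff ℝ 2 u) (hD : IsCompact D) {x : EuclideanSpace ℝ (Fin m)}
    (hx : x ∈ D) :
    max ‖u x‖ (max ‖fderiv ℝ u x‖ ‖fderiv ℝ (fderiv ℝ u) x‖) ≤ C2NormOn u D := by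
  have hcont : Continuous fun x => max ‖u x‖ (max ‖fderiv ℝ u x‖ ‖fderiv ℝ (fderiv ℝ u) x‖) :=
    hu.continuous.norm.max ((hu.continuous_fderiv (by norm_num)).norm.max
      ((hu.fderiv_right (m := 1) (by norm_num)).continuous_fderiv (by norm_num)).norm)
  obtain ⟨M, hM⟩ := hD.bddAbove_image hcont.continuousOn
  refine le_trans ?_ (le_ciSup ⟨max M 0, ?_⟩ x)
  · rw [ciSup_pos hx]
  · rintro _ ⟨y, rfl⟩
    exact Real.iSup_le (fun hy => le_max_of_le_left (hM ⟨y, hy, rfl⟩)) (le_max_right _ _)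

theorem norm_fderiv_le_c2NormOn (hu : ContDiff ℝ 2 u) (hD : IsCompact D)
    {x : EuclideanSpace ℝ (Fin m)} (hx : x ∈ D) : ‖fderiv ℝ u x‖ ≤ C2NormOn u D :=
  (le_max_left _ _).trans ((le_max_right _ _).trans (le_c2NormOn hu hD hx))

theorem norm_fderiv_fderiv_le_c2NormOn (hu : ContDiff ℝ 2 u) (hD : IsCompact D)
    {x : EuclideanSpace ℝ (Fin m)} (hx : x ∈ D) : ‖fderiv ℝ (fderiv ℝ u) x‖ ≤ C2NormOn u D :=
  (le_max_right _ _).trans ((le_max_right _ _).trans (le_c2NormOn hu hD hx))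

theorem c2NormOn_sub_le (hu : ContDiff ℝ 2 u) (hv : ContDiff ℝ 2 v) (hD : IsCompact D) :
    C2NormOn (u - v) D ≤ C2NormOn u D + C2NormOn v D := by
  refine c2NormOn_le (add_nonneg c2NormOn_nonneg c2NormOn_nonneg) fun x hx => ?_
  have hu' := le_c2NormOn hu hD hx
  have hv' := le_c2NormOn hv hD hx
  have hD1 : fderiv ℝ (u - v) = fderiv ℝ u - fderiv ℝ v :=
    funext fun z =>
      fderiv_sub (hu.differentiable (by norm_num) z) (hv.differentiable (by norm_num) z)
  have hD2 :
      fderiv ℝ (fderiv ℝ (u - v)) x = fderiv ℝ (fderiv ℝ u) x - fderiv ℝ (fderiv ℝ v) x := by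
    rw [hD1]
    exact fderiv_sub ((hu.fderiv_right (m := 1) (by norm_num)).differentiable (by norm_num) x)
      ((hv.fderiv_right (m := 1) (by norm_num)).differentiable (by norm_num) x)
  simp only [max_le_iff] at hu' hv' ⊢
  rw [Pi.sub_apply, hD2, hD1, Pi.sub_apply]
  exact ⟨(norm_sub_le _ _).trans (add_le_add hu'.1 hv'.1),
    (norm_sub_le _ _).trans (add_le_add hu'.2.1 hv'.2.1),
    (norm_sub_le (fderiv ℝ (fderiv ℝ u) x) _).trans (add_le_add hu'.2.2 hv'.2.2)⟩

end C2Norm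

section Taylor

variable {E F : Type*} [NormedAddCommGroup E] [NormedSpace ℝ E] [NormedAddCommGroup F]
  [NormedSpace ℝ F]

theorem Convex.norm_image_sub_sub_fderiv_le {h : E → F} {s : Set E} (hs : Convex ℝ s)
    (hh : ContDiff ℝ 2 h) {M : ℝ} (hM : ∀ z ∈ s, ‖fderiv ℝ (fderiv ℝ h) z‖ ≤ M)
    {x y : E} (hx : x ∈ s) (hy : y ∈ s) :
    ‖h y - h x - fderiv ℝ h x (y - x)‖ ≤ M * ‖y - x‖ ^ 2 := by
  have hDh : Differentiable ℝ (fderiv ℝ h) :=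
    (hh.fderiv_right (m := 1) (by norm_num)).differentiable (by norm_num)
  have hseg : ∀ z ∈ segment ℝ x y,
      ‖fderiv ℝ h z - fderiv ℝ h x‖ ≤ M * ‖y - x‖ := fun z hz => by
    have hzx : ‖z - x‖ ≤ ‖y - x‖ := by
      rw [← dist_eq_norm, ← dist_eq_norm, dist_comm z, dist_comm y]
      linarith [dist_add_dist_of_mem_segment hz, dist_nonneg (x := z) (y := y)]
    calc ‖fderiv ℝ h z - fderiv ℝ h x‖ ≤ M * ‖z - x‖ :=
          hs.norm_image_sub_le_of_norm_fderiv_le (fun w _ => hDh w) hM hx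
            (hs.segment_subset hx hy hz)
      _ ≤ M * ‖y - x‖ :=
          mul_le_mul_of_nonneg_left hzx ((norm_nonneg (fderiv ℝ (fderiv ℝ h) x)).trans (hM x hx))
  simpa [pow_two, mul_assoc] using (convex_segment x y).norm_image_sub_le_of_norm_fderiv_le'
    (fun z _ => hh.differentiable (by norm_num) z) hseg (left_mem_segment ℝ x y)
    (right_mem_segment ℝ x y)

end Taylor

section Transversal

variable {E F : Type*} [NormedAddCommGroup E] [NormedSpace ℝ E] [NormedAddCommGroup F]
  [NormedSpace ℝ F]

theorem Convex.mul_norm_sub_le_of_transversal {h : E → F} {s : Set E} (hs : Convex ℝ s)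
    (hh : ContDiff ℝ 2 h) {K d η : ℝ} (hK : 1 ≤ K)
    (hD2 : ∀ z ∈ s, ‖fderiv ℝ (fderiv ℝ h) z‖ ≤ d) {x y : E} (hx : x ∈ s) (hy : y ∈ s)
    (htrans : ∀ ξ : E, ‖ξ‖ = 1 → d ≤ K * (‖h x‖ + ‖fderiv ℝ h x ξ‖))
    (hhx : ‖h x‖ ≤ η) (hhy : ‖h y‖ ≤ η) (hxy : 4 * K * ‖y - x‖ ≤ 1) :
    d * ‖y - x‖ ≤ 3 * K * η := by
  have hη : 0 ≤ η := (norm_nonneg _).trans hhx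
  rcases eq_or_ne (y - x) 0 with hyx | hyx
  · rw [hyx, norm_zero, mul_zero]; positivity
  set a := ‖y - x‖
  have ha : 0 < a := norm_pos_iff.mpr hyx
  have hd : 0 ≤ d := (norm_nonneg (fderiv ℝ (fderiv ℝ h) x)).trans (hD2 x hx)
  have hunit : ‖a⁻¹ • (y - x)‖ = 1 := by rw [norm_smul, norm_inv, norm_norm, inv_mul_cancel₀ ha.ne']
  have hdir : a * ‖fderiv ℝ h x (a⁻¹ • (y - x))‖ = ‖fderiv ℝ h x (y - x)‖ := by
    rw [map_smul, norm_smul, norm_inv, norm_norm, mul_inv_cancel_left₀ ha.ne']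
  have hslope : ‖fderiv ℝ h x (y - x)‖ ≤ 2 * η + d * a ^ 2 :=
    calc ‖fderiv ℝ h x (y - x)‖
        ≤ ‖h y - h x‖ + ‖h y - h x - fderiv ℝ h x (y - x)‖ := norm_le_norm_add_norm_sub _ _
      _ ≤ (‖h y‖ + ‖h x‖) + d * a ^ 2 :=
          add_le_add (norm_sub_le _ _) (hs.norm_image_sub_sub_fderiv_le hh hD2 hx hy)
      _ ≤ 2 * η + d * a ^ 2 := by linarith
  have hlower : d * a ≤ K * a * η + K * (2 * η + d * a ^ 2) := by
    have := mul_le_mul_of_nonneg_left (htrans _ hunit) ha.le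
    nlinarith [mul_le_mul_of_nonneg_left hhx (by positivity : 0 ≤ K * a),
      mul_le_mul_of_nonneg_left hslope (by positivity : 0 ≤ K)]
  -- `4 K a ≤ 1` absorbs the Taylor remainder `K d a²` into the left-hand side `d a`.
  nlinarith [mul_le_mul_of_nonneg_left hxy (by positivity : 0 ≤ d * a),
    mul_le_mul_of_nonneg_left hxy (by positivity : 0 ≤ η)]

end Transversal

theorem IsDeltaSet.card_le_of_clustered {α : Type*} [PseudoMetricSpace α] {δ s C r ρ : ℝ}
    {X : Set α} (hX : IsDeltaSet δ s C X) (hXfin : X.Finite) (hC : 0 ≤ C) (hδ : 0 ≤ δ)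
    (hδr : δ ≤ r) {Y T : Finset α} (hYX : ↑Y ⊆ X) (hYT : ↑Y ⊆ ⋃ t ∈ T, Metric.ball t ρ)
    (hclust : ∀ x ∈ Y, ∀ y ∈ Y, dist x y < 2 * ρ → dist x y ≤ r) :
    (Y.card : ℝ) ≤ T.card * (C * r ^ s * X.ncard) := by
  classical
  have hcover : Y ⊆ T.biUnion fun t => Y.filter (· ∈ Metric.ball t ρ) := fun y hy => by
    obtain ⟨t, ht, hyt⟩ := Set.mem_iUnion₂.mp (hYT hy)
    exact Finset.mem_biUnion.mpr ⟨t, ht, Finset.mem_filter.mpr ⟨hy, hyt⟩⟩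
  have hpiece : ∀ t ∈ T,
      ((Y.filter (· ∈ Metric.ball t ρ)).card : ℝ) ≤ C * r ^ s * X.ncard := by
    intro t _
    rcases (Y.filter (· ∈ Metric.ball t ρ)).eq_empty_or_nonempty with hempty | ⟨z, hz⟩
    · rw [hempty, Finset.card_empty, Nat.cast_zero]
      have := Real.rpow_nonneg (hδ.trans hδr) s
      positivity
    have hsub : ↑(Y.filter (· ∈ Metric.ball t ρ)) ⊆ X ∩ Metric.closedBall z r := by
      intro w hw
      rw [Finset.coe_filter, Set.mem_ofPred_eq] at hw
      rw [Finset.mem_filter] at hz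
      refine ⟨hYX hw.1, hclust w hw.1 z hz.1 ?_⟩
      linarith [dist_triangle_right w z t, Metric.mem_ball.mp hw.2, Metric.mem_ball.mp hz.2]
    calc ((Y.filter (· ∈ Metric.ball t ρ)).card : ℝ)
        ≤ (X ∩ Metric.closedBall z r).ncard := by
          rw [← Set.ncard_coe_finset]
          exact_mod_cast Set.ncard_le_ncard hsub (hXfin.inter_of_left _)
      _ ≤ C * r ^ s * X.ncard := hX z r hδr
  calc (Y.card : ℝ) ≤ ∑ t ∈ T, ((Y.filter (· ∈ Metric.ball t ρ)).card : ℝ) := by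
        exact_mod_cast (Finset.card_le_card hcover).trans Finset.card_biUnion_le
    _ ≤ ∑ _t ∈ T, C * r ^ s * X.ncard := Finset.sum_le_sum hpiece
    _ = T.card * (C * r ^ s * X.ncard) := by rw [Finset.sum_const, nsmul_eq_mul]

namespace CinematicPair

variable {m l : ℕ} {K : ℝ} {f g : EuclideanSpace ℝ (Fin m) → EuclideanSpace ℝ (Fin l)}

theorem contDiff_sub (hfg : CinematicPair K f g) : ContDiff ℝ 2 (f - g) :=
  hfg.1.sub hfg.2.1

theorem c2NormOn_sub_le_two_mul (hfg : CinematicPair K f g) :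
    C2NormOn (f - g) (unitCube m) ≤ 2 * K := by
  linarith [c2NormOn_sub_le hfg.1 hfg.2.1 isCompact_unitCube (D := unitCube m), hfg.2.2.1,
    hfg.2.2.2.1]

theorem c2NormOn_sub_le_mul (hfg : CinematicPair K f g) (hK : 0 < K)
    {x : EuclideanSpace ℝ (Fin m)} (hx : x ∈ unitCube m) (ξ : EuclideanSpace ℝ (Fin m))
    (hξ : ‖ξ‖ = 1) :
    C2NormOn (f - g) (unitCube m) ≤ K * (‖(f - g) x‖ + ‖fderiv ℝ (f - g) x ξ‖) := by
  rw [fderiv_sub (hfg.1.differentiable (by norm_num) x) (hfg.2.1.differentiable (by norm_num) x)]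
  exact (inv_mul_le_iff₀ hK).mp (hfg.2.2.2.2 x hx ξ hξ)

theorem norm_sub_le_of_dist_lt (hfg : CinematicPair K f g) {δ : ℝ}
    {x p : EuclideanSpace ℝ (Fin m)} (hx : x ∈ unitCube m) (hp : p ∈ unitCube m)
    (hpx : dist p x < δ) (hfgp : ‖f p - g p‖ < 2 * δ) :
    ‖(f - g) x‖ ≤ (2 + 2 * K) * δ := by
  have hlip : ‖(f - g) x - (f - g) p‖ ≤ 2 * K * ‖x - p‖ :=
    convex_unitCube.norm_image_sub_le_of_norm_fderiv_le
      (fun z _ => hfg.contDiff_sub.differentiable (by norm_num) z)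
      (fun z hz => (norm_fderiv_le_c2NormOn hfg.contDiff_sub isCompact_unitCube hz).trans
        hfg.c2NormOn_sub_le_two_mul) hp hx
  have hK : 0 ≤ K := c2NormOn_nonneg.trans hfg.2.2.1
  have hxp : 2 * K * ‖x - p‖ ≤ 2 * K * δ := by
    rw [← dist_eq_norm, dist_comm]
    exact mul_le_mul_of_nonneg_left hpx.le (by positivity)
  calc ‖(f - g) x‖ ≤ ‖(f - g) p‖ + ‖(f - g) x - (f - g) p‖ := norm_le_norm_add_norm_sub' _ _
    _ ≤ (2 + 2 * K) * δ := by linarith [show ‖(f - g) p‖ < 2 * δ from hfgp]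

theorem card_le_of_isDeltaSet (hfg : CinematicPair K f g) (hK : 1 ≤ K)
    {T : Finset (EuclideanSpace ℝ (Fin m))}
    (hT : unitCube m ⊆ ⋃ t ∈ T, Metric.ball t (1 / (8 * K))) {ε s δ c : ℝ} (hc : 1 ≤ c)
    (hδ : 0 < δ) (hδd : δ ≤ C2NormOn (f - g) (unitCube m))
    {X : Set (EuclideanSpace ℝ (Fin m))} (hXfin : X.Finite) (hXcube : X ⊆ unitCube m)
    (hXds : IsDeltaSet δ s (δ ^ (-ε)) X) (hXcard : (X.ncard : ℝ) ≤ δ ^ (-s))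
    {Y : Finset (EuclideanSpace ℝ (Fin m))} (hYX : ↑Y ⊆ X)
    (hY : ∀ y ∈ Y, ‖(f - g) y‖ ≤ c * δ) :
    (Y.card : ℝ) ≤
      T.card * (3 * K * c) ^ s * δ ^ (-ε) * C2NormOn (f - g) (unitCube m) ^ (-s) := by
  set d := C2NormOn (f - g) (unitCube m)
  have hd : 0 < d := hδ.trans_le hδd
  set r := 3 * K * c * δ / d
  have hδr : δ ≤ r := by
    rw [le_div_iff₀ hd]
    have hd2K : d ≤ 2 * K := hfg.c2NormOn_sub_le_two_mul
    have hKδ : 0 ≤ K * δ := by positivity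
    nlinarith [mul_le_mul_of_nonneg_left hd2K hδ.le, mul_le_mul_of_nonneg_left hc hKδ]
  have hclust : ∀ x ∈ Y, ∀ y ∈ Y, dist x y < 2 * (1 / (8 * K)) → dist x y ≤ r := by
    intro x hx y hy hxy
    have hyx : 4 * K * ‖y - x‖ ≤ 1 := by
      rw [← dist_eq_norm, dist_comm]
      rw [show 2 * (1 / (8 * K)) = 1 / (4 * K) by field_simp; ring,
        lt_div_iff₀ (by positivity)] at hxy
      linarith
    have := convex_unitCube.mul_norm_sub_le_of_transversal hfg.contDiff_sub hK
      (fun z hz => norm_fderiv_fderiv_le_c2NormOn hfg.contDiff_sub isCompact_unitCube hz)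
      (hXcube (hYX hx)) (hXcube (hYX hy))
      (hfg.c2NormOn_sub_le_mul (by positivity) (hXcube (hYX hx))) (hY x hx) (hY y hy) hyx
    rw [dist_comm, dist_eq_norm, le_div_iff₀ hd]
    linarith
  have hrδ : r ^ s * δ ^ (-s) = (3 * K * c) ^ s * d ^ (-s) := by
    rw [show r = 3 * K * c * δ * d⁻¹ by rfl, Real.mul_rpow (by positivity) (by positivity),
      Real.mul_rpow (by positivity) hδ.le, Real.inv_rpow hd.le, Real.rpow_neg hδ.le,
      Real.rpow_neg hd.le]
    field_simp [(Real.rpow_pos_of_pos hδ s).ne']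
  calc (Y.card : ℝ) ≤ T.card * (δ ^ (-ε) * r ^ s * X.ncard) :=
        hXds.card_le_of_clustered hXfin (by positivity) hδ.le hδr hYX
          ((hYX.trans hXcube).trans hT) hclust
    _ ≤ T.card * (δ ^ (-ε) * r ^ s * δ ^ (-s)) := by gcongr
    _ = T.card * (3 * K * c) ^ s * δ ^ (-ε) * d ^ (-s) := by
        rw [mul_assoc (δ ^ (-ε)), hrδ]; ring

end CinematicPair

theorem stmt10_general (n : ℕ) (K : ℝ) (hK : 1 ≤ K) :
    ∃ C : ℝ, 0 < C ∧
      ∀ ε s : ℝ, 0 < ε → 0 < s → s ≤ (n : ℝ) - 2 →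
      ∀ f g : EuclideanSpace ℝ (Fin (n-2)) → EuclideanSpace ℝ (Fin (n-1)),
        CinematicPair K f g →
        ∀ δ : ℝ, 0 < δ → δ ≤ C2NormOn (f - g) (unitCube (n-2)) →
        ∀ X : Set (EuclideanSpace ℝ (Fin (n-2))), X.Finite → X ⊆ unitCube (n-2) →
          IsDeltaSet δ s (δ ^ (-ε)) X → (X.ncard : ℝ) ≤ δ ^ (-s) →
          ∃ F : Finset (EuclideanSpace ℝ (Fin (n-2))),
            (F.card : ℝ) ≤ C * δ ^ (-ε) * C2NormOn (f - g) (unitCube (n-2)) ^ (-s) ∧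
            {p | ∃ x ∈ X, dist p x < δ} ∩
                {x ∈ unitCube (n-2) | ‖f x - g x‖ < 2 * δ}
              ⊆ ⋃ p ∈ F, Metric.ball p δ := by
  obtain ⟨T, hTne, hT⟩ :=
    exists_finset_unitCube_subset_iUnion_ball (m := n - 2) (by positivity : 0 < 1 / (8 * K))
  set c := 2 + 2 * K
  have hKc : 1 ≤ 3 * K * c := by nlinarith
  refine ⟨T.card * (3 * K * c) ^ ((n : ℝ) - 2), by positivity, ?_⟩
  intro ε s _ _ hsn f g hfg δ hδ hδd X hXfin hXcube hXds hXcard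
  let F := hXfin.toFinset.filter fun x => ‖(f - g) x‖ ≤ c * δ
  refine ⟨F, ?_, ?_⟩
  · calc (F.card : ℝ) ≤ T.card * (3 * K * c) ^ s * δ ^ (-ε) *
          C2NormOn (f - g) (unitCube (n - 2)) ^ (-s) :=
        hfg.card_le_of_isDeltaSet hK hT (by linarith) hδ hδd hXfin hXcube hXds hXcard
          (fun x hx => hXfin.mem_toFinset.mp (Finset.mem_filter.mp hx).1)
          (fun x hx => (Finset.mem_filter.mp hx).2)
      _ ≤ _ := by
        have := Real.rpow_nonneg (c2NormOn_nonneg (u := f - g) (D := unitCube (n - 2))) (-s)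
        have := Real.rpow_le_rpow_of_exponent_le hKc hsn
        gcongr
  · rintro p ⟨⟨x, hxX, hpx⟩, hp, hfgp⟩
    refine Set.mem_iUnion₂.mpr ⟨x, Finset.mem_filter.mpr ⟨hXfin.mem_toFinset.mpr hxX, ?_⟩, hpx⟩
    exact hfg.norm_sub_le_of_dist_lt (hXcube hxX) hp hpx hfgp

/-- For a `K`-cinematic pair `(f,g)` with `d = ‖f−g‖_{C²}`, `0 < δ ≤ d`,
and a finite `(δ,s,δ^{−ε})`-set `X ⊆ [0,1]^{n−2}` with `#X ≤ δ^{−s}`, the set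
`X^δ ∩ {x ∈ [0,1]^{n−2} : |f(x) − g(x)| < 2δ}` can be covered by at most
`C(n,K) δ^{−ε} d^{−s}` balls of radius `δ`. -/
theorem stmt10 (n : ℕ) (hn : 3 ≤ n) (K : ℝ) (hK : 1 ≤ K) :
    ∃ C : ℝ, 0 < C ∧
      ∀ ε s : ℝ, 0 < ε → 0 < s → s ≤ (n : ℝ) - 2 →
      ∀ f g : EuclideanSpace ℝ (Fin (n-2)) → EuclideanSpace ℝ (Fin (n-1)),
        CinematicPair K f g →
        ∀ δ : ℝ, 0 < δ → δ ≤ C2NormOn (f - g) (unitCube (n-2)) →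
        ∀ X : Set (EuclideanSpace ℝ (Fin (n-2))), X.Finite → X ⊆ unitCube (n-2) →
          IsDeltaSet δ s (δ ^ (-ε)) X → (X.ncard : ℝ) ≤ δ ^ (-s) →
          ∃ F : Finset (EuclideanSpace ℝ (Fin (n-2))),
            (F.card : ℝ) ≤ C * δ ^ (-ε) * C2NormOn (f - g) (unitCube (n-2)) ^ (-s) ∧
            {p | ∃ x ∈ X, dist p x < δ} ∩
                {x ∈ unitCube (n-2) | ‖f x - g x‖ < 2 * δ}
              ⊆ ⋃ p ∈ F, Metric.ball p δ :=
  stmt10_general n K hK
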